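/- arXiv:1710.03500 — 3 statements merged into one kernel-verified Lean document; each statement's English description precedes it below -/
import Mathlib

section
/- Fix positive constants C_1, C_2, C_3, C_4, C_α, γ, η. For TOL > 0, let W*(TOL) denote the infimum of N·M·h^{−γ} over real N > 0, M > 0, h > 0 and κ ∈ (0,1) satisfying C_1/N + C_2/(N M) ≤ (κ·TOL/C_α)² and C_3·h^η + C_4/M ≤ (1−κ)·TOL. Then there exist constants 0 < c ≤ C and TOL_0 > 0, depending only on C_1, C_2, C_3, C_4, C_α, γ, η, such that for all 0 < TOL ≤ TOL_0: c·TOL^{−(3+γ/η)} ≤ W*(TOL) ≤ C·TOL^{−(3+γ/η)}; i.e., the minimal average work of the double-loop Monte Carlo estimator is of order TOL^{−(3+γ/η)}. -/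
/-!
Every admissible choice of parameters has `N ≳ TOL⁻²` (the variance constraint with `κ < 1`),
`M ≳ TOL⁻¹` and `h^η ≲ TOL` (the bias constraint), so its work `N M h^{-γ}` is at least a constant
times `TOL^{-(3+γ/η)}`. Conversely, splitting the tolerance evenly (`κ = 1/2`) and taking
`M ∝ TOL⁻¹`, `h^η ∝ TOL`, `N ∝ TOL⁻²` is admissible once `TOL ≤ 1`, and attains that order.
-/

open Real

namespace DLMC

/-- `W*(TOL)` is the infimum of this set. -/
def works (C1 C2 C3 C4 Cα γ η TOL : ℝ) : Set ℝ :=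
  {w : ℝ | ∃ N M h κ : ℝ,
    0 < N ∧ 0 < M ∧ 0 < h ∧ 0 < κ ∧ κ < 1 ∧
    C1 / N + C2 / (N * M) ≤ (κ * TOL / Cα) ^ 2 ∧
    C3 * h ^ η + C4 / M ≤ (1 - κ) * TOL ∧
    w = N * M * h ^ (-γ)}

variable {C1 C2 C3 C4 Cα γ η TOL : ℝ}

lemma rpow_neg_eq_rpow_rpow {h : ℝ} (hh : 0 ≤ h) (hη : η ≠ 0) (γ : ℝ) :
    h ^ (-γ) = (h ^ η) ^ (-(γ / η)) := by
  rw [← rpow_mul hh]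
  congr 1
  field_simp

lemma rpow_neg_div_le_of_rpow_le {h x : ℝ} (hh : 0 < h) (hη : 0 < η) (hγ : 0 ≤ γ)
    (hx : h ^ η ≤ x) : x ^ (-(γ / η)) ≤ h ^ (-γ) := by
  rw [rpow_neg_eq_rpow_rpow hh.le hη.ne']
  exact rpow_le_rpow_of_nonpos (rpow_pos_of_pos hh η) hx (neg_nonpos.mpr (by positivity))

lemma div_sq_mul_div_mul_rpow_neg_eq (A B p : ℝ) {D : ℝ} (hT : 0 < TOL) (hD : 0 < D) :
    A / TOL ^ 2 * (B / TOL) * (TOL / D) ^ (-p) = A * B * D ^ p * TOL ^ (-(3 + p)) := by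
  have hTOL3 : TOL ^ (3 : ℝ) = TOL ^ 2 * TOL := by
    rw [show (3 : ℝ) = ((3 : ℕ) : ℝ) by norm_num, rpow_natCast]; ring
  rw [div_rpow hT.le hD.le, rpow_neg hT.le, rpow_neg hD.le, neg_add, rpow_add hT,
    rpow_neg hT.le, rpow_neg hT.le, hTOL3]
  field_simp

lemma sq_div_le_of_div_le_sq {N κ : ℝ} (hN : 0 < N) (hCα : 0 < Cα) (hT : 0 < TOL)
    (hκ0 : 0 ≤ κ) (hκ1 : κ ≤ 1) (hstat : C1 / N ≤ (κ * TOL / Cα) ^ 2) :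
    C1 * Cα ^ 2 / TOL ^ 2 ≤ N := by
  have hκT : κ * TOL ≤ TOL := mul_le_of_le_one_left hT.le hκ1
  have h : C1 / N ≤ TOL ^ 2 / Cα ^ 2 :=
    hstat.trans (by rw [div_pow]; gcongr)
  rw [div_le_div_iff₀ hN (by positivity)] at h
  rw [div_le_iff₀ (by positivity)]
  linarith

theorem le_of_mem_works (hC2 : 0 ≤ C2) (hC3 : 0 < C3) (hC4 : 0 ≤ C4) (hCα : 0 < Cα)
    (hγ : 0 ≤ γ) (hη : 0 < η) (hT : 0 < TOL) {w : ℝ} (hw : w ∈ works C1 C2 C3 C4 Cα γ η TOL) :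
    C1 * Cα ^ 2 * C4 * C3 ^ (γ / η) * TOL ^ (-(3 + γ / η)) ≤ w := by
  obtain ⟨N, M, h, κ, hN, hM, hh, hκ0, hκ1, hstat, hbias, rfl⟩ := hw
  have hbias' : C3 * h ^ η + C4 / M ≤ TOL := hbias.trans (by nlinarith)
  have hC3h : 0 < C3 * h ^ η := by positivity
  have hC4M : 0 ≤ C4 / M := by positivity
  have hNlow : C1 * Cα ^ 2 / TOL ^ 2 ≤ N :=
    sq_div_le_of_div_le_sq hN hCα hT hκ0.le hκ1.le
      (le_trans (le_add_of_nonneg_right (by positivity)) hstat)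
  have hMlow : C4 / TOL ≤ M := (div_le_comm₀ hM hT).1 (by linarith)
  have hhlow : (TOL / C3) ^ (-(γ / η)) ≤ h ^ (-γ) :=
    rpow_neg_div_le_of_rpow_le hh hη hγ (by rw [le_div_iff₀' hC3]; linarith)
  rw [← div_sq_mul_div_mul_rpow_neg_eq _ _ _ hT hC3]
  gcongr

theorem exists_mem_works_eq (hC1 : 0 < C1) (hC2 : 0 ≤ C2) (hC3 : 0 < C3) (hC4 : 0 < C4)
    (hCα : 0 < Cα) (hη : 0 < η) (hT : 0 < TOL) (hT1 : TOL ≤ 1) :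
    ∃ w ∈ works C1 C2 C3 C4 Cα γ η TOL,
      w = 4 * Cα ^ 2 * (C1 + C2 / (4 * C4)) * (4 * C4) * (4 * C3) ^ (γ / η) *
        TOL ^ (-(3 + γ / η)) := by
  set K := 4 * Cα ^ 2 * (C1 + C2 / (4 * C4))
  set h := (TOL / (4 * C3)) ^ η⁻¹
  have hh : h ^ η = TOL / (4 * C3) := rpow_inv_rpow (by positivity) hη.ne'
  have hK : 0 < K := by positivity
  refine ⟨_, ⟨K / TOL ^ 2, 4 * C4 / TOL, h, 1 / 2, by positivity, by positivity,
    by positivity, by norm_num, by norm_num, ?_, ?_, rfl⟩, ?_⟩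
  · have hC2T : C2 * TOL / (4 * C4) ≤ C2 / (4 * C4) := by
      gcongr
      exact mul_le_of_le_one_right hC2 hT1
    calc C1 / (K / TOL ^ 2) + C2 / (K / TOL ^ 2 * (4 * C4 / TOL))
        = TOL ^ 2 / K * (C1 + C2 * TOL / (4 * C4)) := by field_simp
      _ ≤ TOL ^ 2 / K * (C1 + C2 / (4 * C4)) := by gcongr
      _ = (1 / 2 * TOL / Cα) ^ 2 := by simp only [K]; field_simp; ring
  · rw [hh]
    field_simp
    linarith
  · rw [rpow_neg_eq_rpow_rpow (by positivity) hη.ne', hh,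
      div_sq_mul_div_mul_rpow_neg_eq _ _ _ hT (by positivity)]

end DLMC

open DLMC in
/-- Work complexity of the DLMC estimator: the minimal average work `W*(TOL)` of the
cost-minimization problem is of order `TOL^{−(3+γ/η)}` as `TOL → 0`. -/
theorem dlmc_work_complexity
    (C1 C2 C3 C4 Cα γ η : ℝ)
    (hC1 : 0 < C1) (hC2 : 0 < C2) (hC3 : 0 < C3) (hC4 : 0 < C4)
    (hCα : 0 < Cα) (hγ : 0 < γ) (hη : 0 < η) :
    ∃ c C TOL0 : ℝ, 0 < c ∧ c ≤ C ∧ 0 < TOL0 ∧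
      ∀ TOL : ℝ, 0 < TOL → TOL ≤ TOL0 →
        ∀ Wstar : ℝ,
          Wstar = sInf {w : ℝ | ∃ N M h κ : ℝ,
            0 < N ∧ 0 < M ∧ 0 < h ∧ 0 < κ ∧ κ < 1 ∧
            C1 / N + C2 / (N * M) ≤ (κ * TOL / Cα) ^ 2 ∧
            C3 * h ^ η + C4 / M ≤ (1 - κ) * TOL ∧
            w = N * M * h ^ (-γ)} →
          c * TOL ^ (-(3 + γ / η)) ≤ Wstar ∧ Wstar ≤ C * TOL ^ (-(3 + γ / η)) := by
  set c := C1 * Cα ^ 2 * C4 * C3 ^ (γ / η)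
  set C := 4 * Cα ^ 2 * (C1 + C2 / (4 * C4)) * (4 * C4) * (4 * C3) ^ (γ / η)
  refine ⟨c, max c C, 1, by positivity, le_max_left _ _, one_pos, ?_⟩
  rintro TOL hT hT1 _ rfl
  have hlow : ∀ w ∈ works C1 C2 C3 C4 Cα γ η TOL, c * TOL ^ (-(3 + γ / η)) ≤ w :=
    fun _ ↦ le_of_mem_works hC2.le hC3 hC4.le hCα hγ.le hη hT
  obtain ⟨w, hw, rfl⟩ := exists_mem_works_eq (γ := γ) hC1 hC2.le hC3 hC4 hCα hη hT hT1
  refine ⟨le_csInf ⟨_, hw⟩ hlow, (csInf_le ⟨_, hlow⟩ hw).trans ?_⟩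
  gcongr
  exact le_max_right _ _
end

section
/- Fix positive constants C_{la,1}, C_{la,2}, C_{la,3}, C_α, N_{jac}, γ, η and θ_0 ∈ (0,1). For TOL > 0 and a positive integer N_e, let W*(TOL, N_e) denote the infimum of N·N_{jac}·h^{−γ} over N > 0, h > 0, κ ∈ (0,1) satisfying C_{la,1}/N ≤ (κ·TOL/C_α)² and C_{la,2}/N_e + C_{la,3}·h^η ≤ (1−κ)·TOL. Then there exist constants 0 < c ≤ C and TOL_0 > 0 such that for all 0 < TOL ≤ TOL_0 and all N_e with C_{la,2}/N_e ≤ θ_0·TOL: c·TOL^{−(2+γ/η)} ≤ W*(TOL, N_e) ≤ C·TOL^{−(2+γ/η)}; i.e., the minimal average work of MCLA is of order TOL^{−(2+γ/η)}. -/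
/-!
Each admissible triple `(N, h, κ)` has `N ≥ C_{la,1} C_α² TOL⁻²` because `κ < 1`, and
`h^η ≤ TOL / C_{la,3}` because the Laplace bias is nonnegative, so its work is at least a constant
times `TOL^{−(2+γ/η)}`. Conversely, when the Laplace bias is at most `θ₀ TOL`, the splitting
`κ = (1 − θ₀)/2` together with the sample size and mesh that make both constraints tight is
admissible, and its work is a constant times `TOL^{−(2+γ/η)}`.
-/

open Real

namespace MCLA

def workSet (Cla1 Cla3 Cα Njac γ η TOL lapBias : ℝ) : Set ℝ :=
  {w | ∃ N h κ : ℝ, 0 < N ∧ 0 < h ∧ 0 < κ ∧ κ < 1 ∧ Cla1 / N ≤ (κ * TOL / Cα) ^ 2 ∧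
    lapBias + Cla3 * h ^ η ≤ (1 - κ) * TOL ∧ w = N * Njac * h ^ (-γ)}

lemma rpow_neg_two_add {x : ℝ} (hx : 0 < x) (a : ℝ) :
    x ^ (-(2 + a)) = (x ^ 2)⁻¹ * x ^ (-a) := by
  rw [neg_add, rpow_add hx, rpow_neg hx.le, rpow_two]

lemma rpow_neg_div_le_rpow_neg {x b γ η : ℝ} (hx : 0 < x) (hγ : 0 ≤ γ) (hη : 0 < η)
    (hxb : x ^ η ≤ b) : b ^ (-(γ / η)) ≤ x ^ (-γ) := by
  have hpow : x ^ (-γ) = (x ^ η) ^ (-(γ / η)) := by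
    rw [← rpow_mul hx.le]
    field_simp
  rw [hpow]
  exact rpow_le_rpow_of_nonpos (rpow_pos_of_pos hx η) hxb (neg_nonpos.mpr (by positivity))

lemma sampleSize_lower_bound {Cla1 Cα TOL N κ : ℝ} (hCα : Cα ≠ 0) (hTOL : 0 < TOL) (hN : 0 < N)
    (hκ : 0 ≤ κ) (hκ1 : κ ≤ 1) (hbal : Cla1 / N ≤ (κ * TOL / Cα) ^ 2) :
    Cla1 * Cα ^ 2 * (TOL ^ 2)⁻¹ ≤ N := by
  have hκsq : κ ^ 2 ≤ 1 := pow_le_one₀ hκ hκ1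
  rw [div_pow, mul_pow, div_le_iff₀ hN] at hbal
  rw [← div_eq_mul_inv, div_le_iff₀ (by positivity)]
  have hCα2 : 0 < Cα ^ 2 := by positivity
  calc Cla1 * Cα ^ 2 ≤ κ ^ 2 * TOL ^ 2 / Cα ^ 2 * N * Cα ^ 2 := by gcongr
    _ = κ ^ 2 * (N * TOL ^ 2) := by field_simp
    _ ≤ N * TOL ^ 2 := mul_le_of_le_one_left (by positivity) hκsq

lemma meshSize_lower_bound {Cla3 γ η TOL lapBias h κ : ℝ} (hC3 : 0 < Cla3) (hγ : 0 ≤ γ)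
    (hη : 0 < η) (hTOL : 0 < TOL) (hbias : 0 ≤ lapBias) (hh : 0 < h) (hκ : 0 ≤ κ)
    (hfeas : lapBias + Cla3 * h ^ η ≤ (1 - κ) * TOL) :
    Cla3 ^ (γ / η) * TOL ^ (-(γ / η)) ≤ h ^ (-γ) := by
  have hmesh : h ^ η ≤ TOL / Cla3 := by
    rw [le_div_iff₀ hC3]
    nlinarith
  calc Cla3 ^ (γ / η) * TOL ^ (-(γ / η)) = (TOL / Cla3) ^ (-(γ / η)) := by
        rw [div_rpow hTOL.le hC3.le, rpow_neg hC3.le, div_inv_eq_mul, mul_comm]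
    _ ≤ h ^ (-γ) := rpow_neg_div_le_rpow_neg hh hγ hη hmesh

lemma le_of_mem_workSet {Cla1 Cla3 Cα Njac γ η TOL lapBias w : ℝ} (hC3 : 0 < Cla3)
    (hCα : Cα ≠ 0) (hNjac : 0 ≤ Njac) (hγ : 0 ≤ γ) (hη : 0 < η) (hTOL : 0 < TOL)
    (hbias : 0 ≤ lapBias) (hw : w ∈ workSet Cla1 Cla3 Cα Njac γ η TOL lapBias) :
    Cla1 * Cα ^ 2 * Njac * Cla3 ^ (γ / η) * TOL ^ (-(2 + γ / η)) ≤ w := by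
  obtain ⟨N, h, κ, hN, hh, hκ, hκ1, hbal, hfeas, rfl⟩ := hw
  have hNlow := sampleSize_lower_bound hCα hTOL hN hκ.le hκ1.le hbal
  have hhlow := meshSize_lower_bound hC3 hγ hη hTOL hbias hh hκ.le hfeas
  calc Cla1 * Cα ^ 2 * Njac * Cla3 ^ (γ / η) * TOL ^ (-(2 + γ / η))
      = Cla1 * Cα ^ 2 * (TOL ^ 2)⁻¹ * Njac * (Cla3 ^ (γ / η) * TOL ^ (-(γ / η))) := by
        rw [rpow_neg_two_add hTOL]; ring
    _ ≤ N * Njac * h ^ (-γ) := by gcongr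

lemma mem_workSet {Cla1 Cla3 Cα Njac γ η TOL lapBias κ : ℝ} (hC1 : 0 < Cla1) (hC3 : 0 < Cla3)
    (hCα : Cα ≠ 0) (hη : 0 < η) (hTOL : 0 < TOL) (hκ : 0 < κ) (hκ1 : κ < 1)
    (hbias : lapBias ≤ (1 - 2 * κ) * TOL) :
    Cla1 * Cα ^ 2 * Njac / κ ^ 2 * (κ / Cla3) ^ (-(γ / η)) * TOL ^ (-(2 + γ / η)) ∈
      workSet Cla1 Cla3 Cα Njac γ η TOL lapBias := by
  have hbase : 0 < κ * TOL / Cla3 := by positivity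
  refine ⟨Cla1 * Cα ^ 2 / (κ * TOL) ^ 2, (κ * TOL / Cla3) ^ η⁻¹, κ, by positivity,
    rpow_pos_of_pos hbase _, hκ, hκ1, ?_, ?_, ?_⟩
  · refine le_of_eq ?_
    field_simp
  · rw [rpow_inv_rpow hbase.le hη.ne']
    have hmesh : Cla3 * (κ * TOL / Cla3) = κ * TOL := by field_simp
    linarith
  · have hexp : η⁻¹ * -γ = -(γ / η) := by ring
    rw [← rpow_mul hbase.le, hexp, show κ * TOL / Cla3 = κ / Cla3 * TOL by ring,
      mul_rpow (div_pos hκ hC3).le hTOL.le, rpow_neg_two_add hTOL]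
    field_simp

end MCLA

open MCLA

/-- Work complexity of the MCLA estimator: uniformly over `N_e` with
`C_{la,2}/N_e ≤ θ₀·TOL` (Laplace bias a fixed fraction below the tolerance), the minimal
average work `W*(TOL, N_e)` is of order `TOL^{−(2+γ/η)}` as `TOL → 0`. -/
theorem mcla_work_complexity
    (Cla1 Cla2 Cla3 Cα Njac γ η θ0 : ℝ)
    (hC1 : 0 < Cla1) (hC2 : 0 < Cla2) (hC3 : 0 < Cla3) (hCα : 0 < Cα)
    (hNjac : 0 < Njac) (hγ : 0 < γ) (hη : 0 < η) (hθ0 : 0 < θ0) (hθ1 : θ0 < 1) :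
    ∃ c C TOL0 : ℝ, 0 < c ∧ c ≤ C ∧ 0 < TOL0 ∧
      ∀ TOL : ℝ, 0 < TOL → TOL ≤ TOL0 →
        ∀ Ne : ℕ, 0 < Ne → Cla2 / (Ne : ℝ) ≤ θ0 * TOL →
          ∀ Wstar : ℝ,
            Wstar = sInf {w : ℝ | ∃ N h κ : ℝ,
              0 < N ∧ 0 < h ∧ 0 < κ ∧ κ < 1 ∧
              Cla1 / N ≤ (κ * TOL / Cα) ^ 2 ∧
              Cla2 / (Ne : ℝ) + Cla3 * h ^ η ≤ (1 - κ) * TOL ∧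
              w = N * Njac * h ^ (-γ)} →
            c * TOL ^ (-(2 + γ / η)) ≤ Wstar ∧ Wstar ≤ C * TOL ^ (-(2 + γ / η)) := by
  set κ := (1 - θ0) / 2 with hκ_def
  have hκ : 0 < κ := by linarith
  set c := Cla1 * Cα ^ 2 * Njac * Cla3 ^ (γ / η)
  set C := Cla1 * Cα ^ 2 * Njac / κ ^ 2 * (κ / Cla3) ^ (-(γ / η))
  have hc : 0 < c := by positivity
  have hC : 0 < C := by positivity
  refine ⟨min c C, max c C, 1, lt_min hc hC, min_le_max, one_pos, ?_⟩
  rintro TOL hTOL - Ne - hbias Wstar rfl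
  have hscale : 0 ≤ TOL ^ (-(2 + γ / η)) := (rpow_pos_of_pos hTOL _).le
  have hmem : C * TOL ^ (-(2 + γ / η)) ∈ workSet Cla1 Cla3 Cα Njac γ η TOL (Cla2 / Ne) :=
    mem_workSet hC1 hC3 hCα.ne' hη hTOL hκ (by linarith) (by rw [hκ_def]; linarith)
  have hlow : ∀ w ∈ workSet Cla1 Cla3 Cα Njac γ η TOL (Cla2 / Ne),
      c * TOL ^ (-(2 + γ / η)) ≤ w :=
    fun w hw => le_of_mem_workSet hC3 hCα.ne' hNjac.le hγ.le hη hTOL (by positivity) hw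
  exact ⟨(mul_le_mul_of_nonneg_right (min_le_left c C) hscale).trans (le_csInf ⟨_, hmem⟩ hlow),
    (csInf_le ⟨_, hlow⟩ hmem).trans (mul_le_mul_of_nonneg_right (le_max_right c C) hscale)⟩
end

section
/- Fix positive constants c_1, c_2, N_{jac}, C_{dlis,1}, C_{dlis,2}, C_{dlis,3}, C_{dlis,4}, C_α, γ, η. For TOL > 0, let W*(TOL) denote the infimum of c_1·N·M·h^{−γ} + c_2·N·N_{jac}·h^{−γ} over real N > 0, M > 0, h > 0 and κ ∈ (0,1) satisfying C_{dlis,1}/N + C_{dlis,2}/(N M) ≤ (κ·TOL/C_α)² and C_{dlis,3}·h^η + C_{dlis,4}/M ≤ (1−κ)·TOL. Then there exist constants 0 < c ≤ C and TOL_0 > 0 such that for all 0 < TOL ≤ TOL_0: c·TOL^{−(3+γ/η)} ≤ W*(TOL) ≤ C·TOL^{−(3+γ/η)}; i.e., the double-loop Monte Carlo importance-sampling estimator has minimal average work of order TOL^{−(3+γ/η)}, the same order as DLMC. -/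
/-!
Every feasible design has `N ≥ C₁ (C_α / TOL)²` from the variance constraint, and `M ≥ C₄ / TOL`,
`C₃ hᵑ ≤ TOL` from the bias constraint, so already the term `c₁ N M h^{-γ}` is at least of order
`TOL⁻² · TOL⁻¹ · TOL^{-γ/η}`. Conversely, splitting the tolerance evenly (`κ = 1/2`) and taking
`M = 4 C₄ / TOL`, `C₃ hᵑ = TOL / 4` and the smallest admissible `N` is feasible; for `TOL ≤ 1` the
lower-order contributions (`c₂ N_jac` against `c₁ M`, `C₂ / M` against `C₁`) are absorbed into the
leading constant.
-/

open Real

def dlmcisWorkSet (c1 c2 Njac C1 C2 C3 C4 Cα γ η TOL : ℝ) : Set ℝ :=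
  {w : ℝ | ∃ N M h κ : ℝ,
    0 < N ∧ 0 < M ∧ 0 < h ∧ 0 < κ ∧ κ < 1 ∧
    C1 / N + C2 / (N * M) ≤ (κ * TOL / Cα) ^ 2 ∧
    C3 * h ^ η + C4 / M ≤ (1 - κ) * TOL ∧
    w = c1 * N * M * h ^ (-γ) + c2 * N * Njac * h ^ (-γ)}

section Rpow

variable {T b : ℝ}

lemma div_rpow_neg (q : ℝ) (hT : 0 < T) (hb : 0 < b) : (T / b) ^ (-q) = b ^ q * T ^ (-q) := by
  rw [div_rpow hT.le hb.le, rpow_neg hb.le, div_inv_eq_mul, mul_comm]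

lemma rpow_neg_three_add (q : ℝ) (hT : 0 < T) : T ^ (-(3 + q)) = T ^ (-q) / T ^ 3 := by
  rw [show -(3 + q) = -q - 3 by ring, rpow_sub hT, rpow_ofNat]

lemma rpow_neg_div_le_rpow_neg {h a γ η : ℝ} (hh : 0 < h) (hγ : 0 ≤ γ) (hη : 0 < η)
    (hha : h ^ η ≤ a) : a ^ (-(γ / η)) ≤ h ^ (-γ) := by
  have hpow : h ^ (-γ) = (h ^ η) ^ (-(γ / η)) := by
    rw [← rpow_mul hh.le]
    congr 1
    field_simp
  rw [hpow]
  exact rpow_le_rpow_of_nonpos (rpow_pos_of_pos hh η) hha (neg_nonpos.mpr (by positivity))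

lemma rpow_one_div_rpow_neg {x γ η : ℝ} (hx : 0 ≤ x) : (x ^ (1 / η)) ^ (-γ) = x ^ (-(γ / η)) := by
  rw [← rpow_mul hx]
  ring_nf

end Rpow

section Constraints

variable {C1 C2 C3 C4 Cα η κ T N M h : ℝ}

lemma le_of_variance_constraint (hC2 : 0 ≤ C2) (hCα : Cα ≠ 0) (hT : 0 < T) (hN : 0 < N)
    (hM : 0 < M) (hκ0 : 0 ≤ κ) (hκ1 : κ ≤ 1)
    (hvar : C1 / N + C2 / (N * M) ≤ (κ * T / Cα) ^ 2) : C1 * (Cα / T) ^ 2 ≤ N := by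
  have hκ2 : κ ^ 2 ≤ 1 := pow_le_one₀ hκ0 hκ1
  have hC1N : C1 / N ≤ (T / Cα) ^ 2 :=
    calc C1 / N ≤ C1 / N + C2 / (N * M) := le_add_of_nonneg_right (by positivity)
      _ ≤ κ ^ 2 * (T / Cα) ^ 2 := by rw [← mul_pow, ← mul_div_assoc]; exact hvar
      _ ≤ (T / Cα) ^ 2 := mul_le_of_le_one_left (by positivity) hκ2
  rw [div_le_iff₀ hN] at hC1N
  calc C1 * (Cα / T) ^ 2 ≤ (T / Cα) ^ 2 * N * (Cα / T) ^ 2 := by gcongr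
    _ = N := by field_simp

lemma le_of_bias_constraint (hC3 : 0 ≤ C3) (hT : 0 < T) (hM : 0 < M) (hh : 0 < h)
    (hκ : 0 < κ) (hbias : C3 * h ^ η + C4 / M ≤ (1 - κ) * T) : C4 / T ≤ M := by
  have hC4M : C4 / M ≤ T := by nlinarith [mul_nonneg hC3 (rpow_pos_of_pos hh η).le]
  rw [div_le_iff₀ hM] at hC4M
  rw [div_le_iff₀ hT]
  linarith

lemma rpow_le_of_bias_constraint (hC3 : 0 < C3) (hC4 : 0 ≤ C4) (hT : 0 < T) (hM : 0 < M)
    (hκ : 0 < κ) (hbias : C3 * h ^ η + C4 / M ≤ (1 - κ) * T) : h ^ η ≤ T / C3 := by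
  rw [le_div_iff₀ hC3]
  nlinarith [div_nonneg hC4 hM.le]

end Constraints

section Work

variable {c1 c2 Njac C1 C2 C3 C4 Cα γ η T w : ℝ}

lemma dlmcisWorkSet_bddBelow (hc1 : 0 ≤ c1) (hc2 : 0 ≤ c2) (hNjac : 0 ≤ Njac) :
    BddBelow (dlmcisWorkSet c1 c2 Njac C1 C2 C3 C4 Cα γ η T) := by
  refine ⟨0, ?_⟩
  rintro w ⟨N, M, h, κ, hN, hM, hh, -, -, -, -, rfl⟩
  positivity

lemma le_of_mem_dlmcisWorkSet (hc1 : 0 ≤ c1) (hc2 : 0 ≤ c2) (hNjac : 0 ≤ Njac)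
    (hC2 : 0 ≤ C2) (hC3 : 0 < C3) (hC4 : 0 ≤ C4) (hCα : Cα ≠ 0) (hγ : 0 ≤ γ) (hη : 0 < η)
    (hT : 0 < T) (hw : w ∈ dlmcisWorkSet c1 c2 Njac C1 C2 C3 C4 Cα γ η T) :
    c1 * C1 * Cα ^ 2 * C4 * C3 ^ (γ / η) * T ^ (-(3 + γ / η)) ≤ w := by
  obtain ⟨N, M, h, κ, hN, hM, hh, hκ0, hκ1, hvar, hbias, rfl⟩ := hw
  have hNlb := le_of_variance_constraint hC2 hCα hT hN hM hκ0.le hκ1.le hvar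
  have hMlb := le_of_bias_constraint hC3.le hT hM hh hκ0 hbias
  have hhlb := rpow_neg_div_le_rpow_neg hh hγ hη
    (rpow_le_of_bias_constraint hC3 hC4 hT hM hκ0 hbias)
  calc c1 * C1 * Cα ^ 2 * C4 * C3 ^ (γ / η) * T ^ (-(3 + γ / η))
      = c1 * (C1 * (Cα / T) ^ 2) * (C4 / T) * (T / C3) ^ (-(γ / η)) := by
        rw [div_rpow_neg _ hT hC3, rpow_neg_three_add _ hT]
        field_simp
    _ ≤ c1 * N * M * h ^ (-γ) := by gcongr
    _ ≤ c1 * N * M * h ^ (-γ) + c2 * N * Njac * h ^ (-γ) :=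
        le_add_of_nonneg_right (by positivity)

lemma balanced_mem_dlmcisWorkSet (hC1 : 0 < C1) (hC2 : 0 ≤ C2) (hC3 : 0 < C3) (hC4 : 0 < C4)
    (hCα : Cα ≠ 0) (hη : 0 < η) (hT : 0 < T) :
    (c1 * (4 * C4 / T) + c2 * Njac) * ((C1 + C2 * T / (4 * C4)) * (2 * Cα / T) ^ 2) *
      (T / (4 * C3)) ^ (-(γ / η)) ∈ dlmcisWorkSet c1 c2 Njac C1 C2 C3 C4 Cα γ η T := by
  have hx : 0 ≤ T / (4 * C3) := by positivity
  refine ⟨(C1 + C2 * T / (4 * C4)) * (2 * Cα / T) ^ 2, 4 * C4 / T, (T / (4 * C3)) ^ (1 / η),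
    1 / 2, by positivity, by positivity, by positivity, by norm_num, by norm_num, ?_, ?_, ?_⟩
  · apply le_of_eq
    field_simp
  · rw [← rpow_mul hx, one_div_mul_cancel hη.ne', rpow_one]
    apply le_of_eq
    field_simp
    ring
  · rw [rpow_one_div_rpow_neg hx]
    ring

lemma balanced_work_le (hc1 : 0 ≤ c1) (hc2 : 0 ≤ c2) (hNjac : 0 ≤ Njac) (hC1 : 0 ≤ C1)
    (hC2 : 0 ≤ C2) (hC3 : 0 < C3) (hC4 : 0 < C4) (hT : 0 < T) (hT1 : T ≤ 1) :
    (c1 * (4 * C4 / T) + c2 * Njac) * ((C1 + C2 * T / (4 * C4)) * (2 * Cα / T) ^ 2) *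
        (T / (4 * C3)) ^ (-(γ / η)) ≤
      (c1 * (4 * C4) + c2 * Njac) * ((C1 + C2 / (4 * C4)) * (2 * Cα) ^ 2) * (4 * C3) ^ (γ / η) *
        T ^ (-(3 + γ / η)) := by
  have hcost : c1 * (4 * C4 / T) + c2 * Njac ≤ (c1 * (4 * C4) + c2 * Njac) / T := by
    rw [add_div, ← mul_div_assoc]
    gcongr
    exact le_div_self (by positivity) hT hT1
  have hN : (C1 + C2 * T / (4 * C4)) * (2 * Cα / T) ^ 2 ≤
      (C1 + C2 / (4 * C4)) * (2 * Cα) ^ 2 / T ^ 2 := by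
    rw [div_pow, ← mul_div_assoc]
    gcongr
    exact mul_le_of_le_one_right hC2 hT1
  calc _ ≤ (c1 * (4 * C4) + c2 * Njac) / T * ((C1 + C2 / (4 * C4)) * (2 * Cα) ^ 2 / T ^ 2) *
        (T / (4 * C3)) ^ (-(γ / η)) := by gcongr
    _ = _ := by
        rw [div_rpow_neg _ hT (by positivity), rpow_neg_three_add _ hT]
        field_simp

end Work

/-- Work complexity of the DLMCIS estimator: the minimal average work `W*(TOL)` of the
cost-minimization problem with work model `c₁·N·M·h^{−γ} + c₂·N·N_jac·h^{−γ}` is of order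
`TOL^{−(3+γ/η)}` as `TOL → 0`, the same order as DLMC. -/
theorem dlmcis_work_complexity
    (c1 c2 Njac Cdlis1 Cdlis2 Cdlis3 Cdlis4 Cα γ η : ℝ)
    (hc1 : 0 < c1) (hc2 : 0 < c2) (hNjac : 0 < Njac)
    (hC1 : 0 < Cdlis1) (hC2 : 0 < Cdlis2) (hC3 : 0 < Cdlis3) (hC4 : 0 < Cdlis4)
    (hCα : 0 < Cα) (hγ : 0 < γ) (hη : 0 < η) :
    ∃ c C TOL0 : ℝ, 0 < c ∧ c ≤ C ∧ 0 < TOL0 ∧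
      ∀ TOL : ℝ, 0 < TOL → TOL ≤ TOL0 →
        ∀ Wstar : ℝ,
          Wstar = sInf {w : ℝ | ∃ N M h κ : ℝ,
            0 < N ∧ 0 < M ∧ 0 < h ∧ 0 < κ ∧ κ < 1 ∧
            Cdlis1 / N + Cdlis2 / (N * M) ≤ (κ * TOL / Cα) ^ 2 ∧
            Cdlis3 * h ^ η + Cdlis4 / M ≤ (1 - κ) * TOL ∧
            w = c1 * N * M * h ^ (-γ) + c2 * N * Njac * h ^ (-γ)} →
          c * TOL ^ (-(3 + γ / η)) ≤ Wstar ∧ Wstar ≤ C * TOL ^ (-(3 + γ / η)) := by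
  set c := c1 * Cdlis1 * Cα ^ 2 * Cdlis4 * Cdlis3 ^ (γ / η)
  set C := (c1 * (4 * Cdlis4) + c2 * Njac) * ((Cdlis1 + Cdlis2 / (4 * Cdlis4)) * (2 * Cα) ^ 2) *
    (4 * Cdlis3) ^ (γ / η)
  refine ⟨c, max c C, 1, by positivity, le_max_left _ _, one_pos, ?_⟩
  rintro TOL hT hT1 _ rfl
  have hmem := balanced_mem_dlmcisWorkSet (c1 := c1) (c2 := c2) (Njac := Njac) (γ := γ)
    hC1 hC2.le hC3 hC4 hCα.ne' hη hT
  constructor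
  · exact le_csInf ⟨_, hmem⟩ fun w hw => le_of_mem_dlmcisWorkSet hc1.le hc2.le hNjac.le
      hC2.le hC3 hC4.le hCα.ne' hγ.le hη hT hw
  · calc _ ≤ _ := csInf_le (dlmcisWorkSet_bddBelow hc1.le hc2.le hNjac.le) hmem
      _ ≤ C * TOL ^ (-(3 + γ / η)) :=
          balanced_work_le hc1.le hc2.le hNjac.le hC1.le hC2.le hC3 hC4 hT hT1
      _ ≤ max c C * TOL ^ (-(3 + γ / η)) := by gcongr; exact le_max_right _ _
end
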